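/- Let I₀(x) = ∑_{k=0}^∞ (x/2)^{2k} / (k!)². Then √(2πx)·e^{−x}·I₀(x) → 1 as x → ∞; that is, I₀(x) is asymptotic to e^x / √(2πx) as x → ∞. -/

import Mathlib

open Filter Real

/-- Modified Bessel function of the first kind of order 0. -/
noncomputable def besselI0 (x : ℝ) : ℝ :=
  ∑' k : ℕ, (x / 2) ^ (2 * k) / (k.factorial : ℝ) ^ 2

section Aux
open Topology intervalIntegral
lemma cos_pow_odd_int (k : ℕ) : ∫ θ in (0:ℝ)..π, Real.cos θ ^ (2*k+1) = 0 := by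
  induction k with
  | zero => simpa using integral_cos (a:=0) (b:=π)
  | succ n ih =>
      have h := integral_cos_pow (a:=0) (b:=π) (2*n+1)
      have : 2*(n+1)+1 = (2*n+1)+2 := by ring
      rw [this, h]
      simp [ih, Real.sin_pi]

lemma cos_pow_even_int (k : ℕ) : ∫ θ in (0:ℝ)..π, Real.cos θ ^ (2*k)
    = π * ((2*k).factorial / (4^k * (k.factorial:ℝ)^2)) := by
  induction k with
  | zero => simp
  | succ n ih =>
      have h := integral_cos_pow (a:=0) (b:=π) (2*n)
      have h2 : 2*(n+1) = (2*n)+2 := by ring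
      rw [h2, h, ih]
      simp only [Real.sin_pi, Real.sin_zero]
      have hfac : ((2*n+2).factorial : ℝ) = (2*(n:ℝ)+2) * (2*n+1) * (2*n).factorial := by
        have e : 2*n+2 = (2*n+1)+1 := by ring
        rw [e, Nat.factorial_succ, Nat.factorial_succ]
        push_cast; ring
      have hfac2 : ((n+1).factorial : ℝ) = (n+1) * n.factorial := by
        rw [Nat.factorial_succ]; push_cast; ring
      rw [hfac, hfac2]
      have h4 : (0:ℝ) < 4^n := by positivity
      have hnf : (0:ℝ) < n.factorial := by exact_mod_cast n.factorial_pos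
      field_simp
      push_cast
      ring

lemma besselI0_repr (x : ℝ) : besselI0 x = π⁻¹ * ∫ θ in (0:ℝ)..π, Real.exp (x * Real.cos θ) := by
  have hsum : HasSum (fun n : ℕ => ∫ θ in (0:ℝ)..π, (x * Real.cos θ)^n / n.factorial)
      (∫ θ in (0:ℝ)..π, Real.exp (x * Real.cos θ)) := by
    apply intervalIntegral.hasSum_integral_of_dominated_convergence
      (bound := fun n _ => |x|^n / n.factorial)
    · intro n
      exact (Continuous.aestronglyMeasurable (by fun_prop))
    · intro n
      filter_upwards with t ht
      have h1 : |x * Real.cos t| ≤ |x| := by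
        rw [abs_mul]
        calc |x| * |Real.cos t| ≤ |x| * 1 := by gcongr; exact Real.abs_cos_le_one t
          _ = |x| := mul_one _
      rw [norm_div, norm_pow, Real.norm_eq_abs, Real.norm_eq_abs, Nat.abs_cast]
      gcongr
    · filter_upwards with t ht
      exact Real.summable_pow_div_factorial _
    · apply Continuous.intervalIntegrable; fun_prop
    · filter_upwards with t ht
      have := NormedSpace.expSeries_div_hasSum_exp (x * Real.cos t)
      rwa [← Real.exp_eq_exp_ℝ] at this
  have hterm : ∀ n : ℕ, (∫ θ in (0:ℝ)..π, (x * Real.cos θ)^n / n.factorial)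
      = x^n / n.factorial * ∫ θ in (0:ℝ)..π, Real.cos θ ^ n := by
    intro n
    rw [← intervalIntegral.integral_const_mul]
    congr 1; funext θ; rw [mul_pow]; ring
  simp_rw [hterm] at hsum
  -- odd terms vanish
  have hodd : ∀ m : ℕ, m ∉ Set.range (fun k : ℕ => 2 * k) →
      x^m / m.factorial * ∫ θ in (0:ℝ)..π, Real.cos θ ^ m = 0 := by
    intro m hm
    rcases Nat.even_or_odd m with ⟨r, hr⟩ | ho
    · exact absurd (Set.mem_range.mpr ⟨r, by show 2*r = m; omega⟩) hm
    · obtain ⟨k, rfl⟩ := ho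
      rw [cos_pow_odd_int, mul_zero]
  have hinj : Function.Injective (fun k : ℕ => 2 * k) := mul_right_injective₀ two_ne_zero
  have heven : HasSum (fun k : ℕ => x^(2*k) / (2*k).factorial * ∫ θ in (0:ℝ)..π, Real.cos θ ^ (2*k))
      (∫ θ in (0:ℝ)..π, Real.exp (x * Real.cos θ)) :=
    (hinj.hasSum_iff hodd).2 hsum
  have heq : ∀ k : ℕ, x^(2*k) / (2*k).factorial * ∫ θ in (0:ℝ)..π, Real.cos θ ^ (2*k)
      = π * ((x/2)^(2*k) / (k.factorial:ℝ)^2) := by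
    intro k
    rw [cos_pow_even_int]
    have h1 : ((2*k).factorial : ℝ) ≠ 0 := by exact_mod_cast (2*k).factorial_ne_zero
    have h2 : ((k).factorial : ℝ) ≠ 0 := by exact_mod_cast k.factorial_ne_zero
    have h4 : ((4:ℝ))^k ≠ 0 := by positivity
    have hx : (x/2)^(2*k) = x^(2*k) / 4^k := by
      rw [div_pow, pow_mul, pow_mul]; norm_num
    rw [hx]
    field_simp
  simp_rw [heq] at heven
  have : HasSum (fun k : ℕ => (x/2)^(2*k) / (k.factorial:ℝ)^2)
      (π⁻¹ * ∫ θ in (0:ℝ)..π, Real.exp (x * Real.cos θ)) := by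
    have := heven.mul_left π⁻¹
    simp_rw [← mul_assoc, inv_mul_cancel₀ Real.pi_ne_zero, one_mul] at this
    exact this
  exact this.tsum_eq

lemma repr2 (x : ℝ) :
    Real.exp (-x) * ∫ θ in (0:ℝ)..π, Real.exp (x * Real.cos θ)
      = 2 * ∫ t in (0:ℝ)..(π/2), Real.exp (-(2*x) * Real.sin t ^ 2) := by
  rw [← intervalIntegral.integral_const_mul]
  have h1 : ∀ θ : ℝ, Real.exp (-x) * Real.exp (x * Real.cos θ)
      = Real.exp (-(2*x) * Real.sin (θ/2) ^ 2) := by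
    intro θ
    rw [← Real.exp_add]
    congr 1
    have : Real.cos θ = 1 - 2 * Real.sin (θ/2)^2 := by
      have hc := Real.cos_two_mul' (θ/2)
      have he : (2:ℝ)*(θ/2) = θ := by ring
      rw [he] at hc
      have h2 := Real.sin_sq_add_cos_sq (θ/2)
      linarith
    rw [this]; ring
  simp_rw [h1]
  have := intervalIntegral.integral_comp_div (a := 0) (b := π)
    (f := fun t => Real.exp (-(2*x) * Real.sin t ^ 2)) (c := (2:ℝ)) two_ne_zero
  simp only [zero_div] at this
  rw [this]
  simp [smul_eq_mul]

lemma gauss_lim {φ : ℝ → ℝ} (hφ : Tendsto φ atTop atTop) :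
    Tendsto (fun x => ∫ u in (0:ℝ)..(φ x), Real.exp (-u^2)) atTop (𝓝 (Real.sqrt π / 2)) := by
  have hint : MeasureTheory.IntegrableOn (fun u : ℝ => Real.exp (-1 * u^2)) (Set.Ioi 0) :=
    integrableOn_Ioi_exp_neg_mul_sq_iff.2 one_pos
  have h := MeasureTheory.intervalIntegral_tendsto_integral_Ioi 0 hint hφ
  rw [integral_gaussian_Ioi] at h
  simp only [neg_mul, one_mul] at h
  simpa using h

lemma sqrt_tendsto : Tendsto Real.sqrt atTop atTop := by
  apply tendsto_atTop_atTop.2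
  intro b
  refine ⟨b^2, fun a ha => ?_⟩
  calc b ≤ |b| := le_abs_self b
    _ = Real.sqrt (b^2) := (Real.sqrt_sq_eq_abs b).symm
    _ ≤ Real.sqrt a := Real.sqrt_le_sqrt ha

lemma tail0 {c : ℝ} (hc : 0 < c) :
    Tendsto (fun x => Real.sqrt (2*π*x) * Real.exp (-(c*x))) atTop (𝓝 0) := by
  have h1 : Tendsto (fun y : ℝ => y ^ 1 * Real.exp (-y)) atTop (𝓝 0) :=
    tendsto_pow_mul_exp_neg_atTop_nhds_zero 1
  have h2 : Tendsto (fun x : ℝ => c * x) atTop atTop :=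
    Tendsto.const_mul_atTop hc tendsto_id
  have h3 : Tendsto (fun x : ℝ => (c*x) * Real.exp (-(c*x))) atTop (𝓝 0) := by
    simpa [Function.comp_def] using h1.comp h2
  have h4 : Tendsto (fun x : ℝ => Real.sqrt (2*π) * (c⁻¹ * ((c*x) * Real.exp (-(c*x)))))
      atTop (𝓝 0) := by
    simpa using (h3.const_mul c⁻¹).const_mul (Real.sqrt (2*π))
  apply squeeze_zero' (g := fun x => Real.sqrt (2*π) * (c⁻¹ * ((c*x) * Real.exp (-(c*x)))))
  · filter_upwards [eventually_ge_atTop (0:ℝ)] with x hx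
    positivity
  · filter_upwards [eventually_ge_atTop (1:ℝ)] with x hx
    have hs : Real.sqrt (2*π*x) = Real.sqrt (2*π) * Real.sqrt x := by
      rw [← Real.sqrt_mul (by positivity)]
    have hsx : Real.sqrt x ≤ x := by
      calc Real.sqrt x ≤ Real.sqrt (x^2) := Real.sqrt_le_sqrt (by nlinarith)
        _ = |x| := Real.sqrt_sq_eq_abs x
        _ = x := abs_of_nonneg (by linarith)
    have hc' : c⁻¹ * ((c*x) * Real.exp (-(c*x))) = x * Real.exp (-(c*x)) := by
      field_simp
    rw [hs, hc', mul_assoc]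
    gcongr
  · exact h4

lemma scale (c b : ℝ) (hc : 0 < c) :
    ∫ t in (0:ℝ)..b, Real.exp (-(2*c) * t^2)
      = (Real.sqrt (2*c))⁻¹ * ∫ u in (0:ℝ)..(Real.sqrt (2*c) * b), Real.exp (-u^2) := by
  have hs : (0:ℝ) < Real.sqrt (2*c) := Real.sqrt_pos.2 (by linarith)
  have h := intervalIntegral.integral_comp_mul_left (a := (0:ℝ)) (b := b)
    (f := fun u => Real.exp (-u^2)) (c := Real.sqrt (2*c)) hs.ne'
  simp only [mul_zero, smul_eq_mul] at h
  calc ∫ t in (0:ℝ)..b, Real.exp (-(2*c) * t^2)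
      = ∫ t in (0:ℝ)..b, Real.exp (-(Real.sqrt (2*c) * t)^2) := by
        congr 1; funext t
        congr 1
        rw [mul_pow, Real.sq_sqrt (by linarith : (0:ℝ) ≤ 2*c)]
        ring
    _ = (Real.sqrt (2*c))⁻¹ * ∫ u in (0:ℝ)..(Real.sqrt (2*c) * b), Real.exp (-u^2) := h

lemma gauss_le (T : ℝ) : ∫ u in (0:ℝ)..T, Real.exp (-u^2) ≤ Real.sqrt π / 2 := by
  have hint : MeasureTheory.IntegrableOn (fun u : ℝ => Real.exp (-u^2)) (Set.Ioi 0) := by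
    have := integrableOn_Ioi_exp_neg_mul_sq_iff (b := (1:ℝ)) |>.2 one_pos
    simpa using this
  have hIoi : ∫ u in Set.Ioi (0:ℝ), Real.exp (-u^2) = Real.sqrt π / 2 := by
    have := integral_gaussian_Ioi (1:ℝ)
    simpa using this
  rcases le_or_gt T 0 with hT | hT
  · have h1 : ∫ u in (0:ℝ)..T, Real.exp (-u^2) = -∫ u in T..(0:ℝ), Real.exp (-u^2) := by
      rw [intervalIntegral.integral_symm]
    have h2 : 0 ≤ ∫ u in T..(0:ℝ), Real.exp (-u^2) :=
      intervalIntegral.integral_nonneg hT (fun u _ => (Real.exp_pos _).le)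
    rw [h1]
    have : 0 ≤ Real.sqrt π / 2 := by positivity
    linarith
  · rw [intervalIntegral.integral_of_le hT.le, ← hIoi]
    apply MeasureTheory.setIntegral_mono_set hint
    · exact Filter.Eventually.of_forall (fun u => (Real.exp_pos _).le)
    · exact (Set.Ioc_subset_Ioi_self).eventuallyLE

lemma F_eq (x : ℝ) :
    Real.sqrt (2*π*x) * Real.exp (-x) * besselI0 x
      = Real.sqrt (2*π*x) * π⁻¹ *
        (2 * ∫ t in (0:ℝ)..(π/2), Real.exp (-(2*x) * Real.sin t^2)) := by
  rw [besselI0_repr, ← repr2]; ring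

lemma coeff2 (c x : ℝ) (hc : 0 < c) (hx : 0 < x) :
    Real.sqrt (2*π*x) * π⁻¹ * (2 * ((Real.sqrt (2*(c*x)))⁻¹ * (Real.sqrt π / 2)))
      = (Real.sqrt c)⁻¹ := by
  have h1 : Real.sqrt (2*π*x) = Real.sqrt π * Real.sqrt (2*x) := by
    rw [← Real.sqrt_mul pi_pos.le]; congr 1; ring
  have h2 : Real.sqrt (2*(c*x)) = Real.sqrt c * Real.sqrt (2*x) := by
    rw [← Real.sqrt_mul hc.le]; congr 1; ring
  have h3 : Real.sqrt π * Real.sqrt π = π := Real.mul_self_sqrt pi_pos.le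
  have h4 : (0:ℝ) < Real.sqrt (2*x) := Real.sqrt_pos.2 (by linarith)
  have h5 : (0:ℝ) < Real.sqrt c := Real.sqrt_pos.2 hc
  have h6 : (0:ℝ) < Real.sqrt π := Real.sqrt_pos.2 pi_pos
  rw [h1, h2]
  calc Real.sqrt π * Real.sqrt (2*x) * π⁻¹ *
        (2 * ((Real.sqrt c * Real.sqrt (2*x))⁻¹ * (Real.sqrt π / 2)))
      = (Real.sqrt π * Real.sqrt π * π⁻¹) * (Real.sqrt (2*x) * (Real.sqrt (2*x))⁻¹)
          * (Real.sqrt c)⁻¹ := by rw [mul_inv]; ring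
    _ = (Real.sqrt c)⁻¹ := by
        rw [h3, mul_inv_cancel₀ Real.pi_ne_zero, mul_inv_cancel₀ h4.ne']
        ring

lemma lower_bound : ∀ᶠ x in atTop,
    (2 / Real.sqrt π) * (∫ u in (0:ℝ)..(Real.sqrt (2*(1*x)) * (π/2)), Real.exp (-u^2))
      ≤ Real.sqrt (2*π*x) * Real.exp (-x) * besselI0 x := by
  filter_upwards [eventually_gt_atTop (0:ℝ)] with x hx
  rw [F_eq]
  have hmono : ∫ t in (0:ℝ)..(π/2), Real.exp (-(2*x) * t^2)
      ≤ ∫ t in (0:ℝ)..(π/2), Real.exp (-(2*x) * Real.sin t^2) := by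
    apply intervalIntegral.integral_mono_on (by positivity)
      (Continuous.intervalIntegrable (by fun_prop) _ _)
      (Continuous.intervalIntegrable (by fun_prop) _ _)
    intro t ht
    apply Real.exp_le_exp.2
    have h1 : 0 ≤ Real.sin t :=
      Real.sin_nonneg_of_nonneg_of_le_pi ht.1 (le_trans ht.2 (by linarith [pi_pos]))
    have h2 : Real.sin t ≤ t := Real.sin_le ht.1
    have hss : Real.sin t^2 ≤ t^2 := by nlinarith
    nlinarith [mul_le_mul_of_nonneg_left hss (by positivity : (0:ℝ) ≤ 2*x)]
  have hscale := scale x (π/2) hx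
  have hco := coeff2 1 x one_pos hx
  have h2x : (2:ℝ)*(1*x) = 2*x := by ring
  rw [h2x] at hco ⊢
  have hnn : 0 ≤ Real.sqrt (2*π*x) * π⁻¹ := by positivity
  calc (2 / Real.sqrt π) * (∫ u in (0:ℝ)..(Real.sqrt (2*x) * (π/2)), Real.exp (-u^2))
      = Real.sqrt (2*π*x) * π⁻¹ * (2 * ∫ t in (0:ℝ)..(π/2), Real.exp (-(2*x) * t^2)) := by
        rw [hscale]
        have hπ : (0:ℝ) < Real.sqrt π := Real.sqrt_pos.2 pi_pos
        have : Real.sqrt (2*π*x) * π⁻¹ * (2 * ((Real.sqrt (2*x))⁻¹ *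
            ∫ u in (0:ℝ)..(Real.sqrt (2*x) * (π/2)), Real.exp (-u^2)))
            = (Real.sqrt (2*π*x) * π⁻¹ * (2 * ((Real.sqrt (2*x))⁻¹ * (Real.sqrt π / 2))))
              * ((2 / Real.sqrt π) * ∫ u in (0:ℝ)..(Real.sqrt (2*x) * (π/2)), Real.exp (-u^2)) := by
          field_simp
        rw [this, hco]
        simp [Real.sqrt_one]
    _ ≤ Real.sqrt (2*π*x) * π⁻¹ * (2 * ∫ t in (0:ℝ)..(π/2), Real.exp (-(2*x) * Real.sin t^2)) := by
        gcongr

set_option maxHeartbeats 1000000 in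
lemma upper_bound (ε : ℝ) (hε0 : 0 < ε) (hε1 : ε < 1) : ∀ᶠ x in atTop,
    Real.sqrt (2*π*x) * Real.exp (-x) * besselI0 x
      ≤ (Real.sqrt (1-ε))⁻¹
        + Real.sqrt (2*π*x) * Real.exp (-((2 * Real.sin (min 1 (Real.sqrt ε)) ^ 2) * x)) := by
  set δ := min 1 (Real.sqrt ε) with hδdef
  have hδ0 : 0 < δ := lt_min one_pos (Real.sqrt_pos.2 hε0)
  have hδ1 : δ ≤ 1 := min_le_left _ _
  have hδsq : δ^2 ≤ ε := by
    have h := min_le_right 1 (Real.sqrt ε)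
    have := Real.sq_sqrt hε0.le
    nlinarith [hδ0]
  have hπ3 := Real.pi_gt_three
  have hδπ : δ ≤ π/2 := by linarith
  filter_upwards [eventually_gt_atTop (0:ℝ)] with x hx
  rw [F_eq]
  have hi1 : IntervalIntegrable (fun t => Real.exp (-(2*x) * Real.sin t^2))
      MeasureTheory.volume 0 δ := Continuous.intervalIntegrable (by fun_prop) _ _
  have hi2 : IntervalIntegrable (fun t => Real.exp (-(2*x) * Real.sin t^2))
      MeasureTheory.volume δ (π/2) := Continuous.intervalIntegrable (by fun_prop) _ _
  have hsplit : ∫ t in (0:ℝ)..(π/2), Real.exp (-(2*x) * Real.sin t^2)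
      = (∫ t in (0:ℝ)..δ, Real.exp (-(2*x) * Real.sin t^2))
        + ∫ t in δ..(π/2), Real.exp (-(2*x) * Real.sin t^2) :=
    (intervalIntegral.integral_add_adjacent_intervals hi1 hi2).symm
  -- piece 1
  have hb1 : (∫ t in (0:ℝ)..δ, Real.exp (-(2*x) * Real.sin t^2))
      ≤ ∫ t in (0:ℝ)..δ, Real.exp (-(2*((1-ε)*x)) * t^2) := by
    apply intervalIntegral.integral_mono_on hδ0.le
      (Continuous.intervalIntegrable (by fun_prop) _ _)
      (Continuous.intervalIntegrable (by fun_prop) _ _)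
    intro t ht
    apply Real.exp_le_exp.2
    have hsin : (1-ε) * t^2 ≤ Real.sin t^2 := by
      rcases eq_or_lt_of_le ht.1 with h0 | h0
      · simp [← h0]
      · have h2 : t ≤ 1 := le_trans ht.2 hδ1
        have h3 : t - t^3/4 < Real.sin t := by
          have := Real.sin_gt_sub_cube h0; linarith [pow_pos h0 3]
        have h4 : t^2 ≤ ε := by nlinarith [ht.2, ht.1, hδsq]
        have hpos : 0 < t - t^3/4 := by nlinarith
        have hsq : (t - t^3/4)^2 ≤ Real.sin t^2 := by
          have := pow_le_pow_left₀ hpos.le h3.le 2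
          exact this
        have key : (1-ε)*t^2 ≤ (t - t^3/4)^2 := by
          nlinarith [mul_le_mul_of_nonneg_left h4 (sq_nonneg t), pow_nonneg h0.le 6,
            mul_nonneg hε0.le (sq_nonneg t)]
        linarith
    nlinarith [mul_le_mul_of_nonneg_left hsin (by positivity : (0:ℝ) ≤ 2*x)]
  have hc : (0:ℝ) < (1-ε)*x := mul_pos (by linarith) hx
  have hs1 := scale ((1-ε)*x) δ hc
  have hgle := gauss_le (Real.sqrt (2*((1-ε)*x)) * δ)
  have hb1' : (∫ t in (0:ℝ)..δ, Real.exp (-(2*x) * Real.sin t^2))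
      ≤ (Real.sqrt (2*((1-ε)*x)))⁻¹ * (Real.sqrt π / 2) := by
    refine le_trans hb1 ?_
    rw [hs1]
    gcongr
  -- piece 2
  have hb2 : (∫ t in δ..(π/2), Real.exp (-(2*x) * Real.sin t^2))
      ≤ (π/2) * Real.exp (-(2*x) * Real.sin δ^2) := by
    have hstep : (∫ t in δ..(π/2), Real.exp (-(2*x) * Real.sin t^2))
        ≤ ∫ _t in δ..(π/2), Real.exp (-(2*x) * Real.sin δ^2) := by
      apply intervalIntegral.integral_mono_on hδπ hi2
        (intervalIntegrable_const)
      intro t ht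
      apply Real.exp_le_exp.2
      have hmem1 : δ ∈ Set.Icc (-(π/2)) (π/2) := ⟨by linarith, hδπ⟩
      have hmem2 : t ∈ Set.Icc (-(π/2)) (π/2) := ⟨by linarith [ht.1], ht.2⟩
      have hsinmono : Real.sin δ ≤ Real.sin t :=
        Real.strictMonoOn_sin.monotoneOn hmem1 hmem2 ht.1
      have hsδ : 0 ≤ Real.sin δ := Real.sin_nonneg_of_nonneg_of_le_pi hδ0.le (by linarith)
      have hss : Real.sin δ^2 ≤ Real.sin t^2 := by nlinarith
      nlinarith [mul_le_mul_of_nonneg_left hss (by positivity : (0:ℝ) ≤ 2*x)]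
    refine le_trans hstep ?_
    rw [intervalIntegral.integral_const, smul_eq_mul]
    have := Real.exp_pos (-(2*x) * Real.sin δ^2)
    nlinarith [hδ0]
  -- assemble
  have hnn : (0:ℝ) ≤ Real.sqrt (2*π*x) * π⁻¹ := by positivity
  have hco := coeff2 (1-ε) x (by linarith) hx
  calc Real.sqrt (2*π*x) * π⁻¹ * (2 * ∫ t in (0:ℝ)..(π/2), Real.exp (-(2*x) * Real.sin t^2))
      ≤ Real.sqrt (2*π*x) * π⁻¹ *
          (2 * ((Real.sqrt (2*((1-ε)*x)))⁻¹ * (Real.sqrt π / 2)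
            + (π/2) * Real.exp (-(2*x) * Real.sin δ^2))) := by
        rw [hsplit]
        gcongr
    _ = (Real.sqrt (1-ε))⁻¹ + Real.sqrt (2*π*x) * Real.exp (-((2 * Real.sin δ^2) * x)) := by
        rw [mul_add, mul_add, ← hco]
        have hexp : -(2*x) * Real.sin δ^2 = -((2 * Real.sin δ^2) * x) := by ring
        rw [hexp]
        have hπ0 : π ≠ 0 := Real.pi_ne_zero
        field_simp

end Aux

/-- `I₀(x)` is asymptotic to `e^x / √(2πx)` as `x → ∞`:
`√(2πx)·e^{−x}·I₀(x) → 1`. -/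
theorem besselI0_asymptotic :
    Tendsto (fun x : ℝ => Real.sqrt (2 * Real.pi * x) * Real.exp (-x) * besselI0 x)
      atTop (nhds 1) := by
  open Topology intervalIntegral in
  rw [tendsto_order]
  constructor
  · intro a ha
    have hφ : Tendsto (fun x : ℝ => Real.sqrt (2*(1*x)) * (π/2)) atTop atTop := by
      apply Tendsto.atTop_mul_const (by positivity : (0:ℝ) < π/2)
      exact sqrt_tendsto.comp (by simpa using Tendsto.const_mul_atTop two_pos (tendsto_id (α := ℝ)))
    have hL : Tendsto (fun x : ℝ =>
        (2 / Real.sqrt π) * ∫ u in (0:ℝ)..(Real.sqrt (2*(1*x)) * (π/2)), Real.exp (-u^2))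
        atTop (𝓝 ((2 / Real.sqrt π) * (Real.sqrt π / 2))) := (gauss_lim hφ).const_mul _
    have h1 : (2 / Real.sqrt π) * (Real.sqrt π / 2) = 1 := by
      have : (0:ℝ) < Real.sqrt π := Real.sqrt_pos.2 pi_pos
      field_simp
    rw [h1] at hL
    filter_upwards [hL.eventually (eventually_gt_nhds ha), lower_bound] with x h1 h2
    exact lt_of_lt_of_le h1 h2
  · intro b hb
    have hb0 : (0:ℝ) < b := lt_trans one_pos hb
    have hbi : b⁻¹ < 1 := by rw [inv_lt_one_iff₀]; right; exact hb
    have hbi0 : 0 < b⁻¹ := inv_pos.2 hb0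
    set ε : ℝ := (1 - b⁻¹^2)/2 with hεdef
    have hε0 : 0 < ε := by rw [hεdef]; nlinarith
    have hε1 : ε < 1 := by rw [hεdef]; nlinarith
    have h1ε : b⁻¹^2 < 1 - ε := by rw [hεdef]; nlinarith
    have hsqrtb : b⁻¹ < Real.sqrt (1-ε) := by
      calc b⁻¹ = Real.sqrt (b⁻¹^2) := (Real.sqrt_sq hbi0.le).symm
        _ < Real.sqrt (1-ε) := Real.sqrt_lt_sqrt (by positivity) h1ε
    have hub : (Real.sqrt (1-ε))⁻¹ < b := by
      have h2 : 0 < Real.sqrt (1-ε) := lt_trans hbi0 hsqrtb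
      calc (Real.sqrt (1-ε))⁻¹ < (b⁻¹)⁻¹ := by
            exact inv_strictAnti₀ hbi0 hsqrtb
        _ = b := inv_inv b
    set δ : ℝ := min 1 (Real.sqrt ε) with hδdef
    have hδ0 : 0 < δ := lt_min one_pos (Real.sqrt_pos.2 hε0)
    have hδ1 : δ ≤ 1 := min_le_left _ _
    have hsinδ : 0 < Real.sin δ :=
      Real.sin_pos_of_pos_of_lt_pi hδ0 (by linarith [Real.pi_gt_three])
    have hc : (0:ℝ) < 2 * Real.sin δ^2 := by positivity
    have htail := tail0 hc
    have hU : Tendsto (fun x : ℝ => (Real.sqrt (1-ε))⁻¹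
        + Real.sqrt (2*π*x) * Real.exp (-((2 * Real.sin δ^2) * x))) atTop
        (𝓝 ((Real.sqrt (1-ε))⁻¹ + 0)) := tendsto_const_nhds.add htail
    rw [add_zero] at hU
    filter_upwards [hU.eventually (eventually_lt_nhds hub), upper_bound ε hε0 hε1] with x h1 h2
    exact lt_of_le_of_lt h2 h1
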